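/- Let {φ_i}_{i=1}^m (m ≥ 2) be pairwise linearly independent unit vectors in ℝ², all lying in the open first quadrant (both coordinates positive), so that the frame is not scalable. Let t = min_{i ≠ j} ⟨φ_i, φ_j⟩, and note 0 < t < 1. Then the infimum, over all nonnegative scalars c₁, …, c_m for which {c_iφ_i} still spans ℝ², of the condition number of the frame operator of {c_iφ_i} equals (1 + t)/(1 − t), and it is attained by scaling a pair φ_i, φ_j achieving the minimum inner product t to equal (unit) lengths and scaling all other vectors to zero. -/

import Mathlib

/-!
Write `φ i = (cos θᵢ, sin θᵢ)` with `θᵢ ∈ (0, π/2)`, so that `⟪φ i, φ j⟫ = cos (θᵢ - θⱼ)`. The frame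
operator of `(cᵢ • φ i)` has trace `T = ∑ cᵢ²` and eigenvalues `(T ± R) / 2` with
`R = |∑ cᵢ² e^{2iθᵢ}|`, so its condition number is `(T + R) / (T - R)`, and spanning means `R < T`.
If `α ≤ θᵢ ≤ β` are the extreme angles then `t = cos (β - α)`, and projecting `∑ cᵢ² e^{2iθᵢ}` onto
the direction `α + β` gives `R ≥ ∑ cᵢ² cos (2θᵢ - α - β) ≥ t T`, since `|2θᵢ - α - β| ≤ β - α`.
A pair at minimal inner product has `T = 2` and `R = 2t`.
-/

open scoped RealInnerProductSpace BigOperators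

/-- The frame operator S(φ) = Σᵢ ⟪φ, ψᵢ⟫ • ψᵢ of a finite family in ℝ². -/
noncomputable def frameOperator {m : ℕ} (ψ : Fin m → EuclideanSpace ℝ (Fin 2)) :
    EuclideanSpace ℝ (Fin 2) →L[ℝ] EuclideanSpace ℝ (Fin 2) :=
  ∑ i, (innerSL ℝ (ψ i)).smulRight (ψ i)

/-- The condition number of an operator: ratio of its largest to smallest eigenvalue. -/
noncomputable def condNum
    (S : EuclideanSpace ℝ (Fin 2) →L[ℝ] EuclideanSpace ℝ (Fin 2)) : ℝ :=
  sSup (spectrum ℝ S) / sInf (spectrum ℝ S)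

open Real Matrix

noncomputable def frameMatrix {m : ℕ} (ψ : Fin m → EuclideanSpace ℝ (Fin 2)) :
    Matrix (Fin 2) (Fin 2) ℝ :=
  (of fun i k => ψ i k)ᴴ * of fun i k => ψ i k

lemma frameOperator_eq_toEuclideanCLM {m : ℕ} (ψ : Fin m → EuclideanSpace ℝ (Fin 2)) :
    frameOperator ψ = toEuclideanCLM (𝕜 := ℝ) (frameMatrix ψ) := by
  ext x k
  simp only [frameOperator, frameMatrix, _root_.sum_apply, ContinuousLinearMap.smulRight_apply,
    innerSL_apply_apply, PiLp.inner_apply, ofLp_toEuclideanCLM, mulVec, dotProduct, mul_apply,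
    WithLp.ofLp_sum, WithLp.ofLp_smul, Finset.sum_apply, Pi.smul_apply, smul_eq_mul,
    conjTranspose_apply, of_apply, star_trivial, RCLike.inner_apply, conj_trivial, Finset.sum_mul]
  rw [Finset.sum_comm]
  exact Finset.sum_congr rfl fun i _ => Finset.sum_congr rfl fun j _ => by ring

lemma posDef_frameMatrix_of_span_eq_top {m : ℕ} {ψ : Fin m → EuclideanSpace ℝ (Fin 2)}
    (hψ : Submodule.span ℝ (Set.range ψ) = ⊤) : (frameMatrix ψ).PosDef := by
  refine PosDef.conjTranspose_mul_self _ fun x y hxy => ?_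
  set z : EuclideanSpace ℝ (Fin 2) := WithLp.toLp 2 (x - y)
  have horth : ∀ i, ⟪ψ i, z⟫ = 0 := fun i => by
    have := congrFun hxy i
    simp only [mulVec, dotProduct, of_apply, Fin.sum_univ_two] at this
    simp only [z, PiLp.inner_apply, RCLike.inner_apply, conj_trivial, Fin.sum_univ_two,
      Pi.sub_apply]
    linear_combination this
  have hz : z ∈ (ℝ ∙ z)ᗮ := by
    refine (top_le_iff.mpr hψ).trans (Submodule.span_le.mpr ?_) Submodule.mem_top
    rintro _ ⟨i, rfl⟩
    exact Submodule.mem_orthogonal_singleton_iff_inner_left.mpr (horth i)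
  have : z = 0 := inner_self_eq_zero.mp (Submodule.mem_orthogonal_singleton_iff_inner_left.mp hz)
  exact sub_eq_zero.mp (congrArg WithLp.ofLp this)

lemma spectrum_toEuclideanCLM_fin_two (T x y : ℝ) :
    spectrum ℝ (toEuclideanCLM (𝕜 := ℝ) !![(T + x) / 2, y / 2; y / 2, (T - x) / 2])
      = {(T - √(x ^ 2 + y ^ 2)) / 2, (T + √(x ^ 2 + y ^ 2)) / 2} := by
  have hR : √(x ^ 2 + y ^ 2) ^ 2 = x ^ 2 + y ^ 2 := sq_sqrt (by positivity)
  ext μ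
  have hdet : (algebraMap ℝ _ μ - !![(T + x) / 2, y / 2; y / 2, (T - x) / 2]).det
      = (μ - (T - √(x ^ 2 + y ^ 2)) / 2) * (μ - (T + √(x ^ 2 + y ^ 2)) / 2) := by
    simp only [Algebra.algebraMap_eq_smul_one, det_fin_two, Matrix.sub_apply, Matrix.smul_apply,
      smul_eq_mul, of_apply, one_apply_eq, one_apply_ne zero_ne_one, one_apply_ne one_ne_zero,
      cons_val', cons_val_zero, cons_val_one, cons_val_fin_one]
    linear_combination hR / 4
  rw [AlgEquiv.spectrum_eq, spectrum.mem_iff, isUnit_iff_isUnit_det, isUnit_iff_ne_zero, not_not,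
    hdet, mul_eq_zero, sub_eq_zero, sub_eq_zero, Set.mem_insert_iff, Set.mem_singleton_iff]

lemma condNum_toEuclideanCLM_fin_two (T x y : ℝ) :
    condNum (toEuclideanCLM (𝕜 := ℝ) !![(T + x) / 2, y / 2; y / 2, (T - x) / 2])
      = (T + √(x ^ 2 + y ^ 2)) / (T - √(x ^ 2 + y ^ 2)) := by
  have hR := sqrt_nonneg (x ^ 2 + y ^ 2)
  rw [condNum, spectrum_toEuclideanCLM_fin_two, csSup_pair, csInf_pair,
    sup_eq_right.mpr (by linarith), inf_eq_left.mpr (by linarith),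
    div_div_div_cancel_right₀ two_ne_zero]

lemma one_add_div_one_sub_le_add_div_sub {t T R : ℝ} (ht : t < 1) (htR : t * T ≤ R)
    (hRT : R < T) : (1 + t) / (1 - t) ≤ (T + R) / (T - R) := by
  rw [div_le_div_iff₀ (by linarith) (by linarith)]
  linarith

lemma span_range_eq_top_of_linearIndependent_pair {ι E : Type*} [AddCommGroup E] [Module ℝ E]
    [FiniteDimensional ℝ E] (hE : Module.finrank ℝ E = 2) {ψ : ι → E} {i j : ι}
    (h : LinearIndependent ℝ ![ψ i, ψ j]) : Submodule.span ℝ (Set.range ψ) = ⊤ := by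
  refine top_unique ?_
  rw [← h.span_eq_top_of_card_eq_finrank (by simp [hE])]
  refine Submodule.span_mono ?_
  rintro _ ⟨k, rfl⟩
  fin_cases k
  exacts [⟨i, rfl⟩, ⟨j, rfl⟩]

noncomputable def unitVec (θ : ℝ) : EuclideanSpace ℝ (Fin 2) := !₂[cos θ, sin θ]

lemma inner_unitVec (a b : ℝ) : ⟪unitVec a, unitVec b⟫ = cos (a - b) := by
  simp only [unitVec, PiLp.inner_apply, RCLike.inner_apply, conj_trivial, Fin.sum_univ_two,
    cons_val_zero, cons_val_one, cons_val_fin_one, cos_sub]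
  ring

lemma exists_eq_unitVec {v : EuclideanSpace ℝ (Fin 2)} (hv : ‖v‖ = 1) (h0 : 0 < v 0)
    (h1 : 0 < v 1) : ∃ θ ∈ Set.Ioo 0 (π / 2), v = unitVec θ := by
  have hv2 : v 0 ^ 2 + v 1 ^ 2 = 1 := by
    simpa [EuclideanSpace.norm_eq, Fin.sum_univ_two] using hv
  refine ⟨arcsin (v 1), ⟨arcsin_pos.mpr h1, arcsin_lt_pi_div_two.mpr (by nlinarith)⟩, ?_⟩
  ext k
  fin_cases k
  · simp [unitVec, cos_arcsin, ← hv2, sqrt_sq h0.le]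
  · simp [unitVec, sin_arcsin (by linarith) (by nlinarith)]

lemma cos_sub_mem_Ioo {a b : ℝ} (ha : a ∈ Set.Ioo 0 (π / 2)) (hb : b ∈ Set.Ioo 0 (π / 2))
    (hab : a ≠ b) : cos (a - b) ∈ Set.Ioo 0 1 := by
  obtain ⟨ha0, ha1⟩ := ha
  obtain ⟨hb0, hb1⟩ := hb
  refine ⟨cos_pos_of_mem_Ioo ⟨by linarith, by linarith⟩, (cos_le_one _).lt_of_ne fun h => ?_⟩
  rw [cos_eq_one_iff_of_lt_of_lt (by linarith) (by linarith), sub_eq_zero] at h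
  exact hab h

lemma frameMatrix_smul_unitVec {m : ℕ} (c θ : Fin m → ℝ) :
    frameMatrix (fun i => c i • unitVec (θ i))
      = !![(∑ i, c i ^ 2 + ∑ i, c i ^ 2 * cos (2 * θ i)) / 2,
            (∑ i, c i ^ 2 * sin (2 * θ i)) / 2;
           (∑ i, c i ^ 2 * sin (2 * θ i)) / 2,
            (∑ i, c i ^ 2 - ∑ i, c i ^ 2 * cos (2 * θ i)) / 2] := by
  ext k l
  fin_cases k <;> fin_cases l <;>
  simp only [frameMatrix, unitVec, PiLp.smul_apply, smul_eq_mul,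
    conjTranspose_eq_transpose_of_trivial, Fin.zero_eta, Fin.mk_one, Fin.isValue, mul_apply,
    transpose_apply, of_apply, cons_val', cons_val_zero, cons_val_one, cons_val_fin_one, cos_two_mul', sin_two_mul,
    ← Finset.sum_add_distrib, ← Finset.sum_sub_distrib, Finset.sum_div] <;>
  refine Finset.sum_congr rfl fun i _ => ?_
  · linear_combination c i ^ 2 / 2 * sin_sq_add_cos_sq (θ i)
  · ring
  · ring
  · linear_combination c i ^ 2 / 2 * sin_sq_add_cos_sq (θ i)

lemma condNum_frameOperator_smul_unitVec {m : ℕ} (c θ : Fin m → ℝ) :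
    condNum (frameOperator fun i => c i • unitVec (θ i))
      = (∑ i, c i ^ 2
          + √((∑ i, c i ^ 2 * cos (2 * θ i)) ^ 2 + (∑ i, c i ^ 2 * sin (2 * θ i)) ^ 2))
        / (∑ i, c i ^ 2
          - √((∑ i, c i ^ 2 * cos (2 * θ i)) ^ 2 + (∑ i, c i ^ 2 * sin (2 * θ i)) ^ 2)) := by
  rw [frameOperator_eq_toEuclideanCLM, frameMatrix_smul_unitVec, condNum_toEuclideanCLM_fin_two]

lemma sqrt_lt_sum_sq_of_span_eq_top {m : ℕ} {c θ : Fin m → ℝ}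
    (hspan : Submodule.span ℝ (Set.range fun i => c i • unitVec (θ i)) = ⊤) :
    √((∑ i, c i ^ 2 * cos (2 * θ i)) ^ 2 + (∑ i, c i ^ 2 * sin (2 * θ i)) ^ 2)
      < ∑ i, c i ^ 2 := by
  have hdet := (posDef_frameMatrix_of_span_eq_top hspan).det_pos
  rw [frameMatrix_smul_unitVec, det_fin_two_of] at hdet
  rw [sqrt_lt (by positivity) (Finset.sum_nonneg fun i _ => sq_nonneg (c i))]
  linarith

lemma mul_add_mul_le_sqrt {a b x y : ℝ} (hab : a ^ 2 + b ^ 2 = 1) :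
    a * x + b * y ≤ √(x ^ 2 + y ^ 2) :=
  (le_abs_self _).trans (abs_le_sqrt (by nlinarith [sq_nonneg (a * y - b * x)]))

lemma cos_mul_sum_le_sqrt {m : ℕ} {w θ : Fin m → ℝ} (hw : ∀ i, 0 ≤ w i) {α β : ℝ}
    (hθ : ∀ i, θ i ∈ Set.Icc α β) (hαβ : β - α ≤ π) :
    cos (β - α) * ∑ i, w i
      ≤ √((∑ i, w i * cos (2 * θ i)) ^ 2 + (∑ i, w i * sin (2 * θ i)) ^ 2) := by
  calc cos (β - α) * ∑ i, w i ≤ ∑ i, w i * cos (2 * θ i - (α + β)) := by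
        rw [Finset.mul_sum]
        refine Finset.sum_le_sum fun i _ => ?_
        rw [mul_comm, ← cos_abs (2 * θ i - _)]
        obtain ⟨hα, hβ⟩ := hθ i
        exact mul_le_mul_of_nonneg_left (cos_le_cos_of_nonneg_of_le_pi (abs_nonneg _) hαβ
          (abs_le.mpr ⟨by linarith, by linarith⟩)) (hw i)
    _ = cos (α + β) * ∑ i, w i * cos (2 * θ i) + sin (α + β) * ∑ i, w i * sin (2 * θ i) := by
        simp only [cos_sub, Finset.mul_sum, ← Finset.sum_add_distrib]
        exact Finset.sum_congr rfl fun i _ => by ring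
    _ ≤ _ := mul_add_mul_le_sqrt (cos_sq_add_sin_sq _)

lemma sum_ite_eq_or_eq_sq_mul {m : ℕ} {i j : Fin m} (hij : i ≠ j) (f : Fin m → ℝ) :
    ∑ l, (if l = i ∨ l = j then (1 : ℝ) else 0) ^ 2 * f l = f i + f j := by
  simp [ite_pow, Finset.sum_ite, Finset.filter_or, Finset.filter_eq', hij]

lemma condNum_frameOperator_pair {m : ℕ} (θ : Fin m → ℝ) {i j : Fin m} (hij : i ≠ j)
    (hθ : 0 ≤ cos (θ i - θ j)) :
    condNum (frameOperator fun l => (if l = i ∨ l = j then (1 : ℝ) else 0) • unitVec (θ l))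
      = (1 + cos (θ i - θ j)) / (1 - cos (θ i - θ j)) := by
  have hR : (cos (2 * θ i) + cos (2 * θ j)) ^ 2 + (sin (2 * θ i) + sin (2 * θ j)) ^ 2
      = (2 * cos (θ i - θ j)) ^ 2 := by
    rw [cos_add_cos, sin_add_sin, show (2 * θ i + 2 * θ j) / 2 = θ i + θ j by ring,
      show (2 * θ i - 2 * θ j) / 2 = θ i - θ j by ring]
    linear_combination 4 * cos (θ i - θ j) ^ 2 * sin_sq_add_cos_sq (θ i + θ j)
  have hT : ∑ l, (if l = i ∨ l = j then (1 : ℝ) else 0) ^ 2 = 2 := by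
    simpa [one_add_one_eq_two] using sum_ite_eq_or_eq_sq_mul hij 1
  rw [condNum_frameOperator_smul_unitVec, hT, sum_ite_eq_or_eq_sq_mul hij,
    sum_ite_eq_or_eq_sq_mul hij, hR, sqrt_sq (by linarith), ← mul_one_add, ← mul_one_sub,
    mul_div_mul_left _ _ two_ne_zero]

theorem stmt_16_general (m : ℕ) (φ : Fin m → EuclideanSpace ℝ (Fin 2))
    (hunit : ∀ i, ‖φ i‖ = 1)
    (hquad : ∀ i, 0 < φ i 0 ∧ 0 < φ i 1)
    (hind : ∀ i j, i ≠ j → LinearIndependent ℝ ![φ i, φ j])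
    (t : ℝ) (ht : IsLeast {s : ℝ | ∃ i j, i ≠ j ∧ s = ⟪φ i, φ j⟫} t) :
    0 < t ∧ t < 1 ∧
    IsLeast {r : ℝ | ∃ c : Fin m → ℝ, (∀ i, 0 ≤ c i) ∧
        Submodule.span ℝ (Set.range fun i => c i • φ i) = ⊤ ∧
        r = condNum (frameOperator fun i => c i • φ i)} ((1 + t) / (1 - t)) ∧
    ∀ i j, i ≠ j → ⟪φ i, φ j⟫ = t →
      condNum (frameOperator fun l => (if l = i ∨ l = j then (1 : ℝ) else 0) • φ l)
        = (1 + t) / (1 - t) := by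
  choose θ hθ hφ using fun i => exists_eq_unitVec (hunit i) (hquad i).1 (hquad i).2
  obtain rfl : φ = fun i => unitVec (θ i) := funext hφ
  simp only [inner_unitVec] at ht ⊢
  obtain ⟨i₀, j₀, hij₀, rfl⟩ := ht.1
  have hθ₀ : θ i₀ ≠ θ j₀ := fun h => (hind i₀ j₀ hij₀).injective.ne zero_ne_one (by simp [h])
  obtain ⟨ht₀, ht₁⟩ := cos_sub_mem_Ioo (hθ i₀) (hθ j₀) hθ₀
  have : Nonempty (Fin m) := ⟨i₀⟩
  obtain ⟨p, hp⟩ := Finite.exists_max θ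
  obtain ⟨q, hq⟩ := Finite.exists_min θ
  have htpq : cos (θ i₀ - θ j₀) ≤ cos (θ p - θ q) := by
    rcases eq_or_ne p q with rfl | hpq
    · simpa using ht₁.le
    · exact ht.2 ⟨p, q, hpq, rfl⟩
  refine ⟨ht₀, ht₁, ⟨⟨_, fun l => by positivity, ?_,
    (condNum_frameOperator_pair θ hij₀ ht₀.le).symm⟩, ?_⟩, ?_⟩
  · exact span_range_eq_top_of_linearIndependent_pair finrank_euclideanSpace_fin
      (i := i₀) (j := j₀) (by simpa using hind i₀ j₀ hij₀)
  · rintro r ⟨c, -, hspan, rfl⟩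
    rw [condNum_frameOperator_smul_unitVec]
    refine one_add_div_one_sub_le_add_div_sub ht₁ ?_ (sqrt_lt_sum_sq_of_span_eq_top hspan)
    refine (mul_le_mul_of_nonneg_right htpq (by positivity)).trans ?_
    exact cos_mul_sum_le_sqrt (fun i => sq_nonneg (c i)) (fun l => ⟨hq l, hp l⟩)
      (by linarith [(hθ p).2, (hθ q).1, pi_pos])
  · intro i j hij h
    rw [← h]
    exact condNum_frameOperator_pair θ hij (h ▸ ht₀.le)

/-- For m ≥ 2 pairwise independent unit vectors in the open first quadrant with minimal
pairwise inner product t, one has 0 < t < 1, and the least condition number over all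
nonnegative spanning scalings is (1+t)/(1−t), attained by keeping a minimizing pair at
unit length and scaling all other vectors to zero. -/
theorem stmt_16 (m : ℕ) (hm : 2 ≤ m) (φ : Fin m → EuclideanSpace ℝ (Fin 2))
    (hunit : ∀ i, ‖φ i‖ = 1)
    (hquad : ∀ i, 0 < φ i 0 ∧ 0 < φ i 1)
    (hind : ∀ i j, i ≠ j → LinearIndependent ℝ ![φ i, φ j])
    (t : ℝ) (ht : IsLeast {s : ℝ | ∃ i j, i ≠ j ∧ s = ⟪φ i, φ j⟫} t) :
    0 < t ∧ t < 1 ∧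
    IsLeast {r : ℝ | ∃ c : Fin m → ℝ, (∀ i, 0 ≤ c i) ∧
        Submodule.span ℝ (Set.range fun i => c i • φ i) = ⊤ ∧
        r = condNum (frameOperator fun i => c i • φ i)} ((1 + t) / (1 - t)) ∧
    ∀ i j, i ≠ j → ⟪φ i, φ j⟫ = t →
      condNum (frameOperator fun l => (if l = i ∨ l = j then (1 : ℝ) else 0) • φ l)
        = (1 + t) / (1 - t) :=
  stmt_16_general m φ hunit hquad hind t ht
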